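/- arXiv:1001.1827 — 4 statements merged into one kernel-verified Lean document; each statement's English description precedes it below -/
import Mathlib

section
/- Let probability reproducibility hold: for every unit vector φ ∈ H_S and every k ∈ K, Σ_{l∈J_k} |⟨φ_{kl}, φ⟩|² = ‖(1 ⊗ P_k)(U(φ ⊗ ψ))‖², where P_k is the orthogonal projection of H_A onto the span of ψ_k. Then there exists a family {χ_{kl} : k ∈ K, l ∈ J_k} of unit vectors in H_S with ⟨χ_{kl}, χ_{kj}⟩ = δ_{lj} for each k and all l, j ∈ J_k, such that U(φ_{kl} ⊗ ψ) = χ_{kl} ⊗ ψ_k for all k ∈ K and l ∈ J_k. -/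
/-
For a unit vector `y`, the map `S_y : x ↦ x ⊗ y` is an isometry and `1 ⊗ P_y = S_y S_y†` is an
orthogonal projection.  Probability reproducibility at `φ = φ_{kl}` says that the unit vector
`U (φ_{kl} ⊗ ψ)` keeps its norm under `1 ⊗ P_k`, so it lies in the range of `S_{ψ_k}`:
`U (φ_{kl} ⊗ ψ) = χ_{kl} ⊗ ψ_k` with `χ_{kl} = S_{ψ_k}† U (φ_{kl} ⊗ ψ)`.  Orthonormality of the
`χ_{kl}` for fixed `k` is transported from that of the `φ_{kl}` through the isometries `S_ψ`, `U`
and `S_{ψ_k}`.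
-/

open scoped InnerProductSpace

open ContinuousLinearMap

section Projection

variable {𝕜 E F : Type*} [RCLike 𝕜]
  [NormedAddCommGroup E] [InnerProductSpace 𝕜 E] [CompleteSpace E]
  [NormedAddCommGroup F] [InnerProductSpace 𝕜 F] [CompleteSpace F]

theorem LinearIsometry.isStarProjection_comp_adjoint (S : E →ₗᵢ[𝕜] F) :
    IsStarProjection (S.toContinuousLinearMap ∘L adjoint S.toContinuousLinearMap) where
  isIdempotentElem := by
    have hS := S.toContinuousLinearMap.norm_map_iff_adjoint_comp_self.mp S.norm_map
    rw [IsIdempotentElem, ContinuousLinearMap.mul_def, ContinuousLinearMap.comp_assoc,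
      ← ContinuousLinearMap.comp_assoc (adjoint _), hS, ContinuousLinearMap.one_def,
      ContinuousLinearMap.id_comp]
  isSelfAdjoint := by
    rw [isSelfAdjoint_iff', adjoint_comp, adjoint_adjoint]

theorem IsStarProjection.apply_eq_self_of_norm_apply_eq {p : F →L[𝕜] F}
    (hp : IsStarProjection p) {v : F} (hv : ‖p v‖ = ‖v‖) : p v = v := by
  obtain ⟨_, hp⟩ := isStarProjection_iff_eq_starProjection_range.mp hp
  rw [hp] at hv ⊢
  exact Submodule.starProjection_eq_self_iff.mpr
    ((Submodule.mem_iff_norm_starProjection _ v).mpr hv)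

end Projection

theorem Orthonormal.tsum_norm_inner_sq {𝕜 E ι : Type*} [RCLike 𝕜] [NormedAddCommGroup E]
    [InnerProductSpace 𝕜 E] {v : ι → E} (hv : Orthonormal 𝕜 v) (i : ι) :
    ∑' j, ‖⟪v j, v i⟫_𝕜‖ ^ 2 = 1 := by
  classical
  have hterm : ∀ j, ‖⟪v j, v i⟫_𝕜‖ ^ 2 = if j = i then 1 else 0 := fun j => by
    rw [orthonormal_iff_ite.mp hv]; split_ifs <;> simp
  rw [tsum_congr hterm, tsum_ite_eq]

section PureTensor

variable {𝕜 HS HA HT : Type*} [RCLike 𝕜]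
  [NormedAddCommGroup HS] [InnerProductSpace 𝕜 HS]
  [NormedAddCommGroup HA] [InnerProductSpace 𝕜 HA]
  [NormedAddCommGroup HT] [InnerProductSpace 𝕜 HT]
  (tp : HS →ₗ[𝕜] HA →ₗ[𝕜] HT)
  (htp : ∀ (x x' : HS) (y y' : HA),
    ⟪tp x y, tp x' y'⟫_𝕜 = ⟪x, x'⟫_𝕜 * ⟪y, y'⟫_𝕜)
include htp

theorem norm_pureTensor (x : HS) (y : HA) : ‖tp x y‖ = ‖x‖ * ‖y‖ := by
  have h := htp x x y y
  simp only [inner_self_eq_norm_sq_to_K] at h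
  rw [← sq_eq_sq₀ (norm_nonneg _) (by positivity), mul_pow]
  exact_mod_cast h

def pureTensorRight (y : HA) (hy : ‖y‖ = 1) : HS →ₗᵢ[𝕜] HT where
  toLinearMap := tp.flip y
  norm_map' x := by simp [norm_pureTensor tp htp, hy]

@[simp]
theorem pureTensorRight_apply (y : HA) (hy : ‖y‖ = 1) (x : HS) :
    pureTensorRight tp htp y hy x = tp x y :=
  rfl

variable [CompleteSpace HS] [CompleteSpace HT]

theorem adjoint_pureTensorRight_apply (y : HA) (hy : ‖y‖ = 1) (x : HS) (y' : HA) :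
    adjoint (pureTensorRight tp htp y hy).toContinuousLinearMap (tp x y') =
      ⟪y, y'⟫_𝕜 • x := by
  refine ext_inner_left 𝕜 fun x' => ?_
  rw [adjoint_inner_right, inner_smul_right]
  exact (htp x' x y y').trans (mul_comm _ _)

theorem eq_pureTensorRight_comp_adjoint
    (hdense : Dense ((Submodule.span 𝕜 (Set.range fun p : HS × HA => tp p.1 p.2)) : Set HT))
    (y : HA) (hy : ‖y‖ = 1) (Q : HT →L[𝕜] HT)
    (hQ : ∀ (x : HS) (y' : HA), Q (tp x y') = tp x (⟪y, y'⟫_𝕜 • y)) :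
    Q = (pureTensorRight tp htp y hy).toContinuousLinearMap ∘L
      adjoint (pureTensorRight tp htp y hy).toContinuousLinearMap := by
  refine ext_on hdense ?_
  rintro _ ⟨⟨x, y'⟩, rfl⟩
  rw [comp_apply, adjoint_pureTensorRight_apply, LinearIsometry.coe_toContinuousLinearMap,
    pureTensorRight_apply, map_smul, hQ, map_smul, LinearMap.smul_apply]

end PureTensor

/- `HT` stands for the completed Hilbert tensor product `H_S ⊗ H_A`, axiomatized by a bilinear
map `tp` whose inner products factorize and whose pure tensors span a dense subspace. -/
theorem probability_reproducibility_implies_measurement_coupling_general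
    {HS HA HT : Type*}
    [NormedAddCommGroup HS] [InnerProductSpace ℂ HS] [CompleteSpace HS]
    [NormedAddCommGroup HA] [InnerProductSpace ℂ HA]
    [NormedAddCommGroup HT] [InnerProductSpace ℂ HT] [CompleteSpace HT]
    {K : Type*} {J : K → Type*}
    -- orthonormal basis {φ_{kl}} of H_S
    (B : HilbertBasis (Σ k : K, J k) ℂ HS)
    -- orthonormal family {ψ_k} in H_A
    (ψvec : K → HA) (hψvec : Orthonormal ℂ ψvec)
    -- unit vector ψ ∈ H_A
    (ψ0 : HA) (hψ0 : ‖ψ0‖ = 1)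
    -- the Hilbert tensor product structure on HT
    (tp : HS →ₗ[ℂ] HA →ₗ[ℂ] HT)
    (htp : ∀ (x x' : HS) (y y' : HA),
      ⟪tp x y, tp x' y'⟫_ℂ = ⟪x, x'⟫_ℂ * ⟪y, y'⟫_ℂ)
    (hdense : Dense ((Submodule.span ℂ
      (Set.range fun p : HS × HA => tp p.1 p.2) : Submodule ℂ HT) : Set HT))
    -- a unitary operator U on HT
    (U : HT ≃ₗᵢ[ℂ] HT)
    -- Q k = 1 ⊗ P_k, P_k the orthogonal projection onto span ψ_k
    (Q : K → HT →L[ℂ] HT)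
    (hQ : ∀ (k : K) (x : HS) (y : HA),
      Q k (tp x y) = tp x (⟪ψvec k, y⟫_ℂ • ψvec k))
    -- probability reproducibility condition
    (hprob : ∀ φ : HS, ‖φ‖ = 1 → ∀ k : K,
      (∑' l : J k, ‖⟪(B ⟨k, l⟩ : HS), φ⟫_ℂ‖ ^ 2) = ‖Q k (U (tp φ ψ0))‖ ^ 2) :
    ∃ χ : (Σ k : K, J k) → HS,
      (∀ kl : Σ k : K, J k, ‖χ kl‖ = 1) ∧
      (∀ k : K, Orthonormal ℂ (fun l : J k => χ ⟨k, l⟩)) ∧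
      (∀ kl : Σ k : K, J k, U (tp (B kl) ψ0) = tp (χ kl) (ψvec kl.1)) := by
  set S : K → HS →ₗᵢ[ℂ] HT := fun k => pureTensorRight tp htp (ψvec k) (hψvec.1 k)
  set χ : (Σ k : K, J k) → HS := fun kl =>
    adjoint (S kl.1).toContinuousLinearMap (U (tp (B kl) ψ0))
  have hBk : ∀ k, Orthonormal ℂ fun l : J k => B ⟨k, l⟩ := fun k =>
    B.orthonormal.comp _ sigma_mk_injective
  have hcoupling : ∀ kl : Σ k : K, J k, U (tp (B kl) ψ0) = S kl.1 (χ kl) := by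
    rintro ⟨k, l⟩
    refine ((S k).isStarProjection_comp_adjoint.apply_eq_self_of_norm_apply_eq ?_).symm
    rw [← eq_pureTensorRight_comp_adjoint tp htp hdense _ _ _ (hQ k),
      ← sq_eq_sq₀ (norm_nonneg _) (norm_nonneg _), ← hprob _ (B.orthonormal.1 _),
      (hBk k).tsum_norm_inner_sq l, LinearIsometryEquiv.norm_map, norm_pureTensor tp htp,
      B.orthonormal.1, hψ0, one_mul, one_pow]
  have horth : ∀ k, Orthonormal ℂ fun l : J k => χ ⟨k, l⟩ := by
    intro k
    have hUB :=
      ((hBk k).comp_linearIsometry (pureTensorRight tp htp ψ0 hψ0)).comp_linearIsometryEquiv U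
    rw [← (S k).orthonormal_comp_iff]
    convert hUB using 1
    exact funext fun l => (hcoupling ⟨k, l⟩).symm
  exact ⟨χ, fun kl => (horth kl.1).1 kl.2, horth, hcoupling⟩

theorem probability_reproducibility_implies_measurement_coupling
    {HS HA HT : Type*}
    [NormedAddCommGroup HS] [InnerProductSpace ℂ HS] [CompleteSpace HS]
    [NormedAddCommGroup HA] [InnerProductSpace ℂ HA] [CompleteSpace HA]
    [NormedAddCommGroup HT] [InnerProductSpace ℂ HT] [CompleteSpace HT]
    {K : Type*} {J : K → Type*} [Countable K] [∀ k, Countable (J k)]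
    -- orthonormal basis {φ_{kl}} of H_S
    (B : HilbertBasis (Σ k : K, J k) ℂ HS)
    -- orthonormal family {ψ_k} in H_A
    (ψvec : K → HA) (hψvec : Orthonormal ℂ ψvec)
    -- unit vector ψ ∈ H_A
    (ψ0 : HA) (hψ0 : ‖ψ0‖ = 1)
    -- the Hilbert tensor product structure on HT
    (tp : HS →ₗ[ℂ] HA →ₗ[ℂ] HT)
    (htp : ∀ (x x' : HS) (y y' : HA),
      ⟪tp x y, tp x' y'⟫_ℂ = ⟪x, x'⟫_ℂ * ⟪y, y'⟫_ℂ)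
    (hdense : Dense ((Submodule.span ℂ
      (Set.range fun p : HS × HA => tp p.1 p.2) : Submodule ℂ HT) : Set HT))
    -- a unitary operator U on HT
    (U : HT ≃ₗᵢ[ℂ] HT)
    -- Q k = 1 ⊗ P_k, P_k the orthogonal projection onto span ψ_k
    (Q : K → HT →L[ℂ] HT)
    (hQ : ∀ (k : K) (x : HS) (y : HA),
      Q k (tp x y) = tp x (⟪ψvec k, y⟫_ℂ • ψvec k))
    -- probability reproducibility condition
    (hprob : ∀ φ : HS, ‖φ‖ = 1 → ∀ k : K,
      (∑' l : J k, ‖⟪(B ⟨k, l⟩ : HS), φ⟫_ℂ‖ ^ 2) = ‖Q k (U (tp φ ψ0))‖ ^ 2) :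
    ∃ χ : (Σ k : K, J k) → HS,
      (∀ kl : Σ k : K, J k, ‖χ kl‖ = 1) ∧
      (∀ k : K, Orthonormal ℂ (fun l : J k => χ ⟨k, l⟩)) ∧
      (∀ kl : Σ k : K, J k, U (tp (B kl) ψ0) = tp (χ kl) (ψvec kl.1)) :=
  probability_reproducibility_implies_measurement_coupling_general B ψvec hψvec ψ0 hψ0 tp htp hdense
    U Q hQ hprob
end

section
/- Under the measurement-coupling assumption, for every unit vector φ = Σ_{k,l} c_{kl} φ_{kl} ∈ H_S and all k, m ∈ K one has ⟨U(φ⊗ψ), (1 ⊗ |ψ_k⟩⟨ψ_m|) U(φ⊗ψ)⟩ = ⟨v_k, v_m⟩, where v_k = Σ_{l∈J_k} c_{kl} χ_{kl} and |ψ_k⟩⟨ψ_m| is the operator on H_A sending x to ⟨ψ_m, x⟩·ψ_k. In particular the probability of pointer value k, namely the matrix element with k = m, equals ‖v_k‖² = Σ_{l} |c_{kl}|². -/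
/-! The coupling sends `φ ⊗ ψ = Σ c_{kl} φ_{kl} ⊗ ψ` to `Σ_{k,l} c_{kl} χ_{kl} ⊗ ψ_k`; grouping the
terms by `k` gives `U(φ ⊗ ψ) = Σ_k v_k ⊗ ψ_k`. By orthonormality of the `ψ_k`, the operator
`1 ⊗ |ψ_k⟩⟨ψ_m|` maps this to `v_m ⊗ ψ_k`, whose inner product with `Σ_j v_j ⊗ ψ_j` only sees the
`j = k` term, giving `⟨v_k, v_m⟩`. The norm of `v_k` is computed by Parseval for the orthonormal
family `χ_{k·}`. -/

open scoped InnerProductSpace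

section Orthonormal

variable {𝕜 E ι : Type*} [RCLike 𝕜] [NormedAddCommGroup E] [InnerProductSpace 𝕜 E]
  {v : ι → E} {a : ι → 𝕜} {x : E}

theorem Orthonormal.summable_smul_of_summable_norm_sq [CompleteSpace E] (hv : Orthonormal 𝕜 v)
    (ha : Summable fun i => ‖a i‖ ^ 2) : Summable fun i => a i • v i := by
  simpa [LinearIsometry.toSpanSingleton_apply] using
    (hv.orthogonalFamily.summable_iff_norm_sq_summable a).mpr (by simpa using ha)

theorem Orthonormal.inner_left_eq_of_hasSum (hv : Orthonormal 𝕜 v)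
    (hx : HasSum (fun i => a i • v i) x) (i : ι) : ⟪v i, x⟫_𝕜 = a i := by
  refine ((innerSL 𝕜 (v i)).hasSum hx).unique ?_
  have hsingle := hasSum_single (f := fun j => ⟪v i, a j • v j⟫_𝕜) i fun j hj => by
    simp [inner_smul_right, hv.2 hj.symm]
  simpa [inner_smul_right, inner_self_eq_norm_sq_to_K, hv.1 i] using hsingle

theorem Orthonormal.hasSum_norm_sq_of_hasSum (hv : Orthonormal 𝕜 v)
    (hx : HasSum (fun i => a i • v i) x) : HasSum (fun i => ‖a i‖ ^ 2) (‖x‖ ^ 2) := by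
  have hterm (i : ι) : ⟪x, a i • v i⟫_𝕜 = ((‖a i‖ ^ 2 : ℝ) : 𝕜) := by
    rw [inner_smul_right, ← inner_conj_symm, hv.inner_left_eq_of_hasSum hx, RCLike.mul_conj]
    norm_cast
  have h := (innerSL 𝕜 x).hasSum hx
  simp only [innerSL_apply_apply, hterm, inner_self_eq_norm_sq_to_K] at h
  exact_mod_cast h

end Orthonormal

section InnerMultiplicative

variable {𝕜 E F G ι : Type*} [RCLike 𝕜] [NormedAddCommGroup E] [InnerProductSpace 𝕜 E]
  [NormedAddCommGroup F] [InnerProductSpace 𝕜 F] [NormedAddCommGroup G] [InnerProductSpace 𝕜 G]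
  {tp : E →ₗ[𝕜] F →ₗ[𝕜] G}

theorem norm_apply_apply_eq_mul_of_inner
    (htp : ∀ (x x' : E) (y y' : F), ⟪tp x y, tp x' y'⟫_𝕜 = ⟪x, x'⟫_𝕜 * ⟪y, y'⟫_𝕜)
    (x : E) (y : F) : ‖tp x y‖ = ‖x‖ * ‖y‖ := by
  have h : ‖tp x y‖ ^ 2 = (‖x‖ * ‖y‖) ^ 2 := by
    have := htp x x y y
    simp only [inner_self_eq_norm_sq_to_K] at this
    rw [mul_pow]
    exact_mod_cast this
  exact (pow_left_inj₀ (norm_nonneg _) (by positivity) two_ne_zero).mp h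

theorem HasSum.apply_apply_left
    (htp : ∀ (x x' : E) (y y' : F), ⟪tp x y, tp x' y'⟫_𝕜 = ⟪x, x'⟫_𝕜 * ⟪y, y'⟫_𝕜)
    {f : ι → E} {x : E} (hf : HasSum f x) (y : F) : HasSum (fun i => tp (f i) y) (tp x y) :=
  hf.map (tp.flip y) <| AddMonoidHomClass.continuous_of_bound (tp.flip y) ‖y‖ fun x => by
    rw [LinearMap.flip_apply, norm_apply_apply_eq_mul_of_inner htp, mul_comm]

variable {ψ : ι → F} {w : ι → E} {Φ : G}

theorem inner_apply_apply_of_hasSum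
    (htp : ∀ (x x' : E) (y y' : F), ⟪tp x y, tp x' y'⟫_𝕜 = ⟪x, x'⟫_𝕜 * ⟪y, y'⟫_𝕜)
    (hψ : Orthonormal 𝕜 ψ) (hΦ : HasSum (fun i => tp (w i) (ψ i)) Φ) (x : E) (k : ι) :
    ⟪tp x (ψ k), Φ⟫_𝕜 = ⟪x, w k⟫_𝕜 := by
  refine ((innerSL 𝕜 (tp x (ψ k))).hasSum hΦ).unique ?_
  have hsingle := hasSum_single (f := fun j => ⟪tp x (ψ k), tp (w j) (ψ j)⟫_𝕜) k fun j hj => by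
    simp [htp, hψ.2 hj.symm]
  simpa [htp, inner_self_eq_norm_sq_to_K, hψ.1 k] using hsingle

theorem apply_eq_of_hasSum_of_apply_eq_inner_smul (hψ : Orthonormal 𝕜 ψ)
    (hΦ : HasSum (fun i => tp (w i) (ψ i)) Φ) (R : G →L[𝕜] G) (k m : ι)
    (hR : ∀ (x : E) (y : F), R (tp x y) = tp x (⟪ψ m, y⟫_𝕜 • ψ k)) :
    R Φ = tp (w m) (ψ k) := by
  refine (R.hasSum hΦ).unique ?_
  have hsingle := hasSum_single (f := fun j => R (tp (w j) (ψ j))) m fun j hj => by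
    simp [hR, hψ.2 hj.symm]
  simpa [hR, inner_self_eq_norm_sq_to_K, hψ.1 m] using hsingle

theorem inner_apply_eq_of_hasSum_of_apply_eq_inner_smul
    (htp : ∀ (x x' : E) (y y' : F), ⟪tp x y, tp x' y'⟫_𝕜 = ⟪x, x'⟫_𝕜 * ⟪y, y'⟫_𝕜)
    (hψ : Orthonormal 𝕜 ψ) (hΦ : HasSum (fun i => tp (w i) (ψ i)) Φ) (R : G →L[𝕜] G) (k m : ι)
    (hR : ∀ (x : E) (y : F), R (tp x y) = tp x (⟪ψ m, y⟫_𝕜 • ψ k)) :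
    ⟪Φ, R Φ⟫_𝕜 = ⟪w k, w m⟫_𝕜 := by
  rw [apply_eq_of_hasSum_of_apply_eq_inner_smul hψ hΦ R k m hR, ← inner_conj_symm,
    inner_apply_apply_of_hasSum htp hψ hΦ, inner_conj_symm]

end InnerMultiplicative

theorem pointer_matrix_elements_general
    {HS HA HT : Type*}
    [NormedAddCommGroup HS] [InnerProductSpace ℂ HS] [CompleteSpace HS]
    [NormedAddCommGroup HA] [InnerProductSpace ℂ HA]
    [NormedAddCommGroup HT] [InnerProductSpace ℂ HT]
    {K : Type*} {J : K → Type*}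
    (B : HilbertBasis (Σ k : K, J k) ℂ HS)
    (ψvec : K → HA) (hψvec : Orthonormal ℂ ψvec)
    (ψ0 : HA)
    (tp : HS →ₗ[ℂ] HA →ₗ[ℂ] HT)
    (htp : ∀ (x x' : HS) (y y' : HA),
      ⟪tp x y, tp x' y'⟫_ℂ = ⟪x, x'⟫_ℂ * ⟪y, y'⟫_ℂ)
    (U : HT ≃ₗᵢ[ℂ] HT)
    (χ : (Σ k : K, J k) → HS)
    (hχorth : ∀ k : K, Orthonormal ℂ (fun l : J k => χ ⟨k, l⟩))
    -- measurement-coupling assumption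
    (hmc : ∀ kl : Σ k : K, J k, U (tp (B kl) ψ0) = tp (χ kl) (ψvec kl.1))
    -- R k m = 1 ⊗ |ψ_k⟩⟨ψ_m| : x ⊗ y ↦ x ⊗ (⟨ψ_m, y⟩ ψ_k)
    (R : K → K → HT →L[ℂ] HT)
    (hR : ∀ (k m : K) (x : HS) (y : HA),
      R k m (tp x y) = tp x (⟪ψvec m, y⟫_ℂ • ψvec k))
    (φ : HS) (c : (Σ k : K, J k) → ℂ)
    (hc : ∀ kl : Σ k : K, J k, c kl = ⟪(B kl : HS), φ⟫_ℂ) :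
    ∃ v : K → HS,
      -- v_k = Σ_{l∈J_k} c_{kl} χ_{kl}
      (∀ k : K, HasSum (fun l : J k => c ⟨k, l⟩ • χ ⟨k, l⟩) (v k)) ∧
      -- ⟨U(φ⊗ψ), (1 ⊗ |ψ_k⟩⟨ψ_m|) U(φ⊗ψ)⟩ = ⟨v_k, v_m⟩
      (∀ k m : K,
        ⟪U (tp φ ψ0), R k m (U (tp φ ψ0))⟫_ℂ = ⟪v k, v m⟫_ℂ) ∧
      -- the probability of pointer value k: diagonal element = ‖v_k‖² = Σ_l |c_{kl}|²
      (∀ k : K,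
        ⟪U (tp φ ψ0), R k k (U (tp φ ψ0))⟫_ℂ = ((‖v k‖ ^ 2 : ℝ) : ℂ) ∧
        ‖v k‖ ^ 2 = ∑' l : J k, ‖c ⟨k, l⟩‖ ^ 2) := by
  let v : K → HS := fun k => ∑' l, c ⟨k, l⟩ • χ ⟨k, l⟩
  have hv (k : K) : HasSum (fun l : J k => c ⟨k, l⟩ • χ ⟨k, l⟩) (v k) := by
    refine ((hχorth k).summable_smul_of_summable_norm_sq ?_).hasSum
    simpa only [hc, Function.comp_apply] using
      (B.orthonormal.comp _ sigma_mk_injective).inner_products_summable (x := φ)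
  have hΦ : HasSum (fun k => tp (v k) (ψvec k)) (U (tp φ ψ0)) := by
    refine HasSum.sigma (f := fun kl => tp (c kl • χ kl) (ψvec kl.1)) ?_
      fun k => (hv k).apply_apply_left htp _
    have hcoupled := ((B.hasSum_repr φ).apply_apply_left htp ψ0).map U U.continuous
    simpa [Function.comp_def, B.repr_apply_apply, ← hc, hmc] using hcoupled
  have hmatrix (k m : K) : ⟪U (tp φ ψ0), R k m (U (tp φ ψ0))⟫_ℂ = ⟪v k, v m⟫_ℂ :=
    inner_apply_eq_of_hasSum_of_apply_eq_inner_smul htp hψvec hΦ (R k m) k m (hR k m)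
  refine ⟨v, hv, hmatrix, fun k => ⟨?_, ((hχorth k).hasSum_norm_sq_of_hasSum (hv k)).tsum_eq.symm⟩⟩
  rw [hmatrix, inner_self_eq_norm_sq_to_K]
  norm_cast

theorem pointer_matrix_elements
    {HS HA HT : Type*}
    [NormedAddCommGroup HS] [InnerProductSpace ℂ HS] [CompleteSpace HS]
    [NormedAddCommGroup HA] [InnerProductSpace ℂ HA] [CompleteSpace HA]
    [NormedAddCommGroup HT] [InnerProductSpace ℂ HT] [CompleteSpace HT]
    {K : Type*} {J : K → Type*} [Countable K] [∀ k, Countable (J k)]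
    (B : HilbertBasis (Σ k : K, J k) ℂ HS)
    (ψvec : K → HA) (hψvec : Orthonormal ℂ ψvec)
    (ψ0 : HA) (hψ0 : ‖ψ0‖ = 1)
    (tp : HS →ₗ[ℂ] HA →ₗ[ℂ] HT)
    (htp : ∀ (x x' : HS) (y y' : HA),
      ⟪tp x y, tp x' y'⟫_ℂ = ⟪x, x'⟫_ℂ * ⟪y, y'⟫_ℂ)
    (hdense : Dense ((Submodule.span ℂ
      (Set.range fun p : HS × HA => tp p.1 p.2) : Submodule ℂ HT) : Set HT))
    (U : HT ≃ₗᵢ[ℂ] HT)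
    (χ : (Σ k : K, J k) → HS)
    (hχunit : ∀ kl : Σ k : K, J k, ‖χ kl‖ = 1)
    (hχorth : ∀ k : K, Orthonormal ℂ (fun l : J k => χ ⟨k, l⟩))
    -- measurement-coupling assumption
    (hmc : ∀ kl : Σ k : K, J k, U (tp (B kl) ψ0) = tp (χ kl) (ψvec kl.1))
    -- R k m = 1 ⊗ |ψ_k⟩⟨ψ_m| : x ⊗ y ↦ x ⊗ (⟨ψ_m, y⟩ ψ_k)
    (R : K → K → HT →L[ℂ] HT)
    (hR : ∀ (k m : K) (x : HS) (y : HA),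
      R k m (tp x y) = tp x (⟪ψvec m, y⟫_ℂ • ψvec k))
    (φ : HS) (hφ : ‖φ‖ = 1) (c : (Σ k : K, J k) → ℂ)
    (hc : ∀ kl : Σ k : K, J k, c kl = ⟪(B kl : HS), φ⟫_ℂ) :
    ∃ v : K → HS,
      -- v_k = Σ_{l∈J_k} c_{kl} χ_{kl}
      (∀ k : K, HasSum (fun l : J k => c ⟨k, l⟩ • χ ⟨k, l⟩) (v k)) ∧
      -- ⟨U(φ⊗ψ), (1 ⊗ |ψ_k⟩⟨ψ_m|) U(φ⊗ψ)⟩ = ⟨v_k, v_m⟩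
      (∀ k m : K,
        ⟪U (tp φ ψ0), R k m (U (tp φ ψ0))⟫_ℂ = ⟪v k, v m⟫_ℂ) ∧
      -- the probability of pointer value k: diagonal element = ‖v_k‖² = Σ_l |c_{kl}|²
      (∀ k : K,
        ⟪U (tp φ ψ0), R k k (U (tp φ ψ0))⟫_ℂ = ((‖v k‖ ^ 2 : ℝ) : ℂ) ∧
        ‖v k‖ ^ 2 = ∑' l : J k, ‖c ⟨k, l⟩‖ ^ 2) :=
  pointer_matrix_elements_general B ψvec hψvec ψ0 tp htp U χ hχorth hmc R hR φ c hc
end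

section
/- Assume the measurement-coupling assumption and in addition that the end states are fully orthonormal: ⟨χ_{kl}, χ_{mn}⟩ = δ_{km} δ_{ln} for all k, m ∈ K, l ∈ J_k, n ∈ J_m. Then for every unit vector φ = Σ_{k,l} c_{kl} φ_{kl} ∈ H_S and every bounded operator B on H_A: ⟨U(φ⊗ψ), (1 ⊗ B) U(φ⊗ψ)⟩ = Σ_{k∈K} p_k ⟨ψ_k, B ψ_k⟩, where p_k = Σ_{l∈J_k} |c_{kl}|² (so the apparatus statistics are those of the convex combination Σ_k p_k |ψ_k⟩⟨ψ_k|). -/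
/-! Pushing the expansion `φ = Σ c_{kl} φ_{kl}` through the bounded map `x ↦ U (x ⊗ ψ)` gives
`U (φ ⊗ ψ) = Σ c_{kl} χ_{kl} ⊗ ψ_k`. Since the `χ_{kl}` are orthonormal, `1 ⊗ B` has no matrix
elements between different terms of this expansion, so the expectation value collapses to the
diagonal `Σ |c_{kl}|² ⟨ψ_k, B ψ_k⟩`; summing over `l` first gives the weights `p_k`. -/

open scoped InnerProductSpace ComplexConjugate

section TensorSlice

variable {𝕜 E F G : Type*} [RCLike 𝕜]
  [SeminormedAddCommGroup E] [InnerProductSpace 𝕜 E]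
  [SeminormedAddCommGroup F] [InnerProductSpace 𝕜 F]
  [SeminormedAddCommGroup G] [InnerProductSpace 𝕜 G]

theorem norm_apply_apply_of_inner_self_apply_apply (tp : E →ₗ[𝕜] F →ₗ[𝕜] G)
    (htp : ∀ x y, ⟪tp x y, tp x y⟫_𝕜 = ⟪x, x⟫_𝕜 * ⟪y, y⟫_𝕜) (x : E) (y : F) :
    ‖tp x y‖ = ‖x‖ * ‖y‖ := by
  have hsq : (‖tp x y‖ : 𝕜) ^ 2 = ((‖x‖ * ‖y‖ : ℝ) : 𝕜) ^ 2 := by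
    rw [← inner_self_eq_norm_sq_to_K, htp, inner_self_eq_norm_sq_to_K,
      inner_self_eq_norm_sq_to_K]
    push_cast
    ring
  exact (pow_left_inj₀ (norm_nonneg _) (by positivity) two_ne_zero).mp (mod_cast hsq)

theorem continuous_flip_apply_of_inner_self_apply_apply (tp : E →ₗ[𝕜] F →ₗ[𝕜] G)
    (htp : ∀ x y, ⟪tp x y, tp x y⟫_𝕜 = ⟪x, x⟫_𝕜 * ⟪y, y⟫_𝕜) (y : F) :
    Continuous (tp.flip y) :=
  AddMonoidHomClass.continuous_of_bound _ ‖y‖ fun x => by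
    rw [LinearMap.flip_apply, norm_apply_apply_of_inner_self_apply_apply tp htp, mul_comm]

end TensorSlice

section DiagonalExpectation

variable {𝕜 E ι : Type*} [RCLike 𝕜] [NormedAddCommGroup E] [InnerProductSpace 𝕜 E]

theorem hasSum_inner_map_of_inner_map_eq_zero {e : ι → E} {c : ι → 𝕜} {w : E}
    (hw : HasSum (fun i => c i • e i) w) (T : E →L[𝕜] E)
    (hT : ∀ i j, i ≠ j → ⟪e i, T (e j)⟫_𝕜 = 0) :
    HasSum (fun i => conj (c i) * c i * ⟪e i, T (e i)⟫_𝕜) ⟪w, T w⟫_𝕜 := by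
  have hcol : ∀ j, ⟪w, T (e j)⟫_𝕜 = conj (c j) * ⟪e j, T (e j)⟫_𝕜 := by
    intro j
    have hsum := hw.mapL (innerSLFlip 𝕜 (T (e j)))
    simp only [innerSLFlip_apply_apply, inner_smul_left] at hsum
    refine hsum.unique (hasSum_single j fun i hij => ?_)
    rw [hT i j hij, mul_zero]
  have hsum := (hw.mapL T).mapL (innerSL 𝕜 w)
  simp only [innerSL_apply_apply, map_smul, hcol] at hsum
  exact hsum.congr_fun fun i => by rw [smul_eq_mul]; ring

end DiagonalExpectation

theorem tsum_sigma_ofReal_mul {K : Type*} {J : K → Type*} {p : (Σ k, J k) → ℝ} {a : K → ℂ}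
    {s : ℂ} (h : HasSum (fun i => (p i : ℂ) * a i.1) s) :
    s = ∑' k, ((∑' l, p ⟨k, l⟩ : ℝ) : ℂ) * a k := by
  rw [← h.tsum_eq, h.summable.tsum_sigma]
  simp only [tsum_mul_right, Complex.ofReal_tsum]

theorem apparatus_statistics_of_orthogonal_end_states_general
    {HS HA HT : Type*}
    [NormedAddCommGroup HS] [InnerProductSpace ℂ HS]
    [NormedAddCommGroup HA] [InnerProductSpace ℂ HA]
    [NormedAddCommGroup HT] [InnerProductSpace ℂ HT]
    {K : Type*} {J : K → Type*}
    (B : HilbertBasis (Σ k : K, J k) ℂ HS)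
    (ψvec : K → HA)
    (ψ0 : HA)
    (tp : HS →ₗ[ℂ] HA →ₗ[ℂ] HT)
    (htp : ∀ (x x' : HS) (y y' : HA),
      ⟪tp x y, tp x' y'⟫_ℂ = ⟪x, x'⟫_ℂ * ⟪y, y'⟫_ℂ)
    (U : HT ≃ₗᵢ[ℂ] HT)
    -- the end states χ_{kl}, fully orthonormal: ⟨χ_{kl}, χ_{mn}⟩ = δ_{km} δ_{ln}
    (χ : (Σ k : K, J k) → HS)
    (hχorth : Orthonormal ℂ χ)
    -- measurement-coupling assumption
    (hmc : ∀ kl : Σ k : K, J k, U (tp (B kl) ψ0) = tp (χ kl) (ψvec kl.1))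
    -- a bounded operator Bop on H_A and TB = 1 ⊗ Bop
    (Bop : HA →L[ℂ] HA) (TB : HT →L[ℂ] HT)
    (hTB : ∀ (x : HS) (y : HA), TB (tp x y) = tp x (Bop y))
    (φ : HS) (c : (Σ k : K, J k) → ℂ)
    (hc : ∀ kl : Σ k : K, J k, c kl = ⟪(B kl : HS), φ⟫_ℂ) :
    ⟪U (tp φ ψ0), TB (U (tp φ ψ0))⟫_ℂ =
      ∑' k : K, ((∑' l : J k, ‖c ⟨k, l⟩‖ ^ 2 : ℝ) : ℂ) * ⟪ψvec k, Bop (ψvec k)⟫_ℂ := by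
  have hslice : Continuous (tp.flip ψ0) :=
    continuous_flip_apply_of_inner_self_apply_apply tp (fun x y => htp x x y y) ψ0
  have hexpand : HasSum (fun i => c i • tp (χ i) (ψvec i.1)) (U (tp φ ψ0)) := by
    have hsum := (B.hasSum_repr φ).map (U.toLinearEquiv.toLinearMap ∘ₗ tp.flip ψ0)
      (U.continuous.comp hslice)
    simpa [Function.comp_def, hmc, hc, B.repr_apply_apply] using hsum
  have hdiag : ∀ i j, i ≠ j → ⟪tp (χ i) (ψvec i.1), TB (tp (χ j) (ψvec j.1))⟫_ℂ = 0 :=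
    fun i j hij => by rw [hTB, htp, hχorth.inner_eq_zero hij, zero_mul]
  refine tsum_sigma_ofReal_mul (p := fun i => ‖c i‖ ^ 2)
    (a := fun k => ⟪ψvec k, Bop (ψvec k)⟫_ℂ) ?_
  refine (hasSum_inner_map_of_inner_map_eq_zero hexpand TB hdiag).congr_fun fun i => ?_
  rw [hTB, htp, inner_self_eq_norm_sq_to_K, hχorth.1 i, Complex.conj_mul']
  push_cast
  ring

theorem apparatus_statistics_of_orthogonal_end_states
    {HS HA HT : Type*}
    [NormedAddCommGroup HS] [InnerProductSpace ℂ HS] [CompleteSpace HS]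
    [NormedAddCommGroup HA] [InnerProductSpace ℂ HA] [CompleteSpace HA]
    [NormedAddCommGroup HT] [InnerProductSpace ℂ HT] [CompleteSpace HT]
    {K : Type*} {J : K → Type*} [Countable K] [∀ k, Countable (J k)]
    (B : HilbertBasis (Σ k : K, J k) ℂ HS)
    (ψvec : K → HA) (hψvec : Orthonormal ℂ ψvec)
    (ψ0 : HA) (hψ0 : ‖ψ0‖ = 1)
    (tp : HS →ₗ[ℂ] HA →ₗ[ℂ] HT)
    (htp : ∀ (x x' : HS) (y y' : HA),
      ⟪tp x y, tp x' y'⟫_ℂ = ⟪x, x'⟫_ℂ * ⟪y, y'⟫_ℂ)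
    (hdense : Dense ((Submodule.span ℂ
      (Set.range fun p : HS × HA => tp p.1 p.2) : Submodule ℂ HT) : Set HT))
    (U : HT ≃ₗᵢ[ℂ] HT)
    -- the end states χ_{kl}, fully orthonormal: ⟨χ_{kl}, χ_{mn}⟩ = δ_{km} δ_{ln}
    (χ : (Σ k : K, J k) → HS)
    (hχorth : Orthonormal ℂ χ)
    -- measurement-coupling assumption
    (hmc : ∀ kl : Σ k : K, J k, U (tp (B kl) ψ0) = tp (χ kl) (ψvec kl.1))
    -- a bounded operator Bop on H_A and TB = 1 ⊗ Bop
    (Bop : HA →L[ℂ] HA) (TB : HT →L[ℂ] HT)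
    (hTB : ∀ (x : HS) (y : HA), TB (tp x y) = tp x (Bop y))
    (φ : HS) (hφ : ‖φ‖ = 1) (c : (Σ k : K, J k) → ℂ)
    (hc : ∀ kl : Σ k : K, J k, c kl = ⟪(B kl : HS), φ⟫_ℂ) :
    ⟪U (tp φ ψ0), TB (U (tp φ ψ0))⟫_ℂ =
      ∑' k : K, ((∑' l : J k, ‖c ⟨k, l⟩‖ ^ 2 : ℝ) : ℂ) * ⟪ψvec k, Bop (ψvec k)⟫_ℂ :=
  apparatus_statistics_of_orthogonal_end_states_general B ψvec ψ0 tp htp U χ hχorth hmc Bop TB hTB φ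
    c hc
end

section
/- Fix k ≠ l in ι and α, β ∈ ℝ, and define P_{αkl} = e^{iα}|φ_k⟩⟨φ_l| + e^{−iα}|φ_l⟩⟨φ_k| on H and P'_{βkl} = e^{iβ}|φ'_k⟩⟨φ'_l| + e^{−iβ}|φ'_l⟩⟨φ'_k| on H' (both bounded self-adjoint). Then ⟨P_{αkl}⟩_Φ = ⟨P'_{βkl}⟩_Φ = 0, (Δ_Φ P_{αkl})² = (Δ_Φ P'_{βkl})² = |c_k|² + |c_l|², and ⟨P_{αkl} P'_{βkl}⟩_Φ = e^{i(α+β)}·conj(c_k)·c_l + e^{−i(α+β)}·conj(c_l)·c_k, which is a real number. Consequently, if |c_k|² + |c_l|² > 0, then ρ(P_{αkl}, P'_{βkl}, Φ) = (e^{i(α+β)}·conj(c_k)·c_l + e^{−i(α+β)}·conj(c_l)·c_k)/(|c_k|² + |c_l|²). -/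
/-!
An off-diagonal observable only sees the terms `n = k, l` of `Φ = ∑ c n • φ n ⊗ φ' n`, and it
swaps them up to phases: `(P ⊗ 1) Φ = c k e^{-iα} φ l ⊗ φ' k + c l e^{iα} φ k ⊗ φ' l`.
Since `⟪Φ, φ i ⊗ φ' j⟫ = δ i j * conj (c i)`, this vector is orthogonal to `Φ`, a second
application of `P ⊗ 1` gives back `c k • φ k ⊗ φ' k + c l • φ l ⊗ φ' l`, and `(P ⊗ P') Φ` is a
combination of these two diagonal tensors; every moment is then a two-term computation.
-/

open scoped InnerProductSpace ComplexConjugate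

/-- |u⟩⟨v| : x ↦ ⟨v, x⟩ • u. -/
noncomputable def ketBra {E : Type*} [NormedAddCommGroup E] [InnerProductSpace ℂ E]
    (u v : E) : E →L[ℂ] E :=
  ((innerSL ℂ) v).smulRight u

/-- P_{αkl} = e^{iα}|u⟩⟨v| + e^{−iα}|v⟩⟨u|. -/
noncomputable def offDiag {E : Type*} [NormedAddCommGroup E] [InnerProductSpace ℂ E]
    (α : ℝ) (u v : E) : E →L[ℂ] E :=
  Complex.exp (α * Complex.I) • ketBra u v + Complex.exp (-(α * Complex.I)) • ketBra v u

/-- Expectation value ⟨A⟩_Φ = ⟨Φ, AΦ⟩ (real part). -/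
noncomputable def expec {HT : Type*} [NormedAddCommGroup HT] [InnerProductSpace ℂ HT]
    (Φ : HT) (A : HT →L[ℂ] HT) : ℝ :=
  (⟪Φ, A Φ⟫_ℂ).re

/-- Variance Δ_Φ A = √(⟨A²⟩_Φ − ⟨A⟩_Φ²). -/
noncomputable def Delta {HT : Type*} [NormedAddCommGroup HT] [InnerProductSpace ℂ HT]
    (Φ : HT) (A : HT →L[ℂ] HT) : ℝ :=
  Real.sqrt (expec Φ (A.comp A) - (expec Φ A) ^ 2)

/-- Normalized correlation ρ of A = O⊗1 and B = 1⊗O', with C = O⊗O'. -/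
noncomputable def corr {HT : Type*} [NormedAddCommGroup HT] [InnerProductSpace ℂ HT]
    (Φ : HT) (A B C : HT →L[ℂ] HT) : ℝ :=
  (expec Φ C - expec Φ A * expec Φ B) / (Delta Φ A * Delta Φ B)

lemma offDiag_apply {E : Type*} [NormedAddCommGroup E] [InnerProductSpace ℂ E]
    (α : ℝ) (u v x : E) :
    offDiag α u v x = (Complex.exp (α * Complex.I) * ⟪v, x⟫_ℂ) • u
      + (Complex.exp (-(α * Complex.I)) * ⟪u, x⟫_ℂ) • v := by
  simp [offDiag, ketBra, ContinuousLinearMap.smulRight_apply, smul_smul]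

section Orthonormal

variable {E ι : Type*} [NormedAddCommGroup E] [InnerProductSpace ℂ E] {b : ι → E}
  (hb : Orthonormal ℂ b) {k l : ι}
include hb

lemma offDiag_apply_left (hkl : k ≠ l) (α : ℝ) :
    offDiag α (b k) (b l) (b k) = Complex.exp (-(α * Complex.I)) • b l := by
  simp [offDiag_apply, hb.inner_eq_zero hkl.symm, hb.1 k]

lemma offDiag_apply_right (hkl : k ≠ l) (α : ℝ) :
    offDiag α (b k) (b l) (b l) = Complex.exp (α * Complex.I) • b k := by
  simp [offDiag_apply, hb.inner_eq_zero hkl, hb.1 l]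

lemma offDiag_apply_of_ne {n : ι} (hk : n ≠ k) (hl : n ≠ l) (α : ℝ) :
    offDiag α (b k) (b l) (b n) = 0 := by
  simp [offDiag_apply, hb.inner_eq_zero hk.symm, hb.inner_eq_zero hl.symm]

end Orthonormal

section TensorProduct

variable {H H' HT ι : Type*}
  [NormedAddCommGroup H] [InnerProductSpace ℂ H]
  [NormedAddCommGroup H'] [InnerProductSpace ℂ H']
  [NormedAddCommGroup HT] [InnerProductSpace ℂ HT]
  {tp : H →ₗ[ℂ] H' →ₗ[ℂ] HT} {TOp : (H →L[ℂ] H) → (H' →L[ℂ] H') → (HT →L[ℂ] HT)}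
  {b : ι → H} {b' : ι → H'} {c : ι → ℂ} {Φ : HT} {k l : ι}

lemma hasSum_inner_tp_basis (htp : ∀ (x x' : H) (y y' : H'),
      ⟪tp x y, tp x' y'⟫_ℂ = ⟪x, x'⟫_ℂ * ⟪y, y'⟫_ℂ)
    (hΦ : HasSum (fun n => c n • tp (b n) (b' n)) Φ) (i j : ι) :
    HasSum (fun n => c n * (⟪b i, b n⟫_ℂ * ⟪b' j, b' n⟫_ℂ)) ⟪tp (b i) (b' j), Φ⟫_ℂ := by
  simpa only [innerSL_apply_apply, inner_smul_right, htp] using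
    (innerSL ℂ (tp (b i) (b' j))).hasSum hΦ

lemma inner_tp_basis_self (htp : ∀ (x x' : H) (y y' : H'),
      ⟪tp x y, tp x' y'⟫_ℂ = ⟪x, x'⟫_ℂ * ⟪y, y'⟫_ℂ)
    (hb : Orthonormal ℂ b) (hb' : Orthonormal ℂ b')
    (hΦ : HasSum (fun n => c n • tp (b n) (b' n)) Φ) (i : ι) :
    ⟪Φ, tp (b i) (b' i)⟫_ℂ = conj (c i) := by
  have hsum := hasSum_inner_tp_basis htp hΦ i i
  have hsingle := hasSum_single (f := fun n => c n * (⟪b i, b n⟫_ℂ * ⟪b' i, b' n⟫_ℂ)) i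
    fun n hn => by simp [hb.inner_eq_zero hn.symm]
  rw [← inner_conj_symm, hsum.unique hsingle]
  simp [hb.1 i, hb'.1 i]

lemma inner_tp_basis_of_ne (htp : ∀ (x x' : H) (y y' : H'),
      ⟪tp x y, tp x' y'⟫_ℂ = ⟪x, x'⟫_ℂ * ⟪y, y'⟫_ℂ)
    (hb : Orthonormal ℂ b) (hb' : Orthonormal ℂ b')
    (hΦ : HasSum (fun n => c n • tp (b n) (b' n)) Φ) {i j : ι} (hij : i ≠ j) :
    ⟪Φ, tp (b i) (b' j)⟫_ℂ = 0 := by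
  have hzero : HasSum (fun n => c n * (⟪b i, b n⟫_ℂ * ⟪b' j, b' n⟫_ℂ)) 0 := by
    convert hasSum_zero with n
    rcases eq_or_ne i n with rfl | hin
    · simp [hb'.inner_eq_zero hij.symm]
    · simp [hb.inner_eq_zero hin]
  rw [← inner_conj_symm, (hasSum_inner_tp_basis htp hΦ i j).unique hzero, map_zero]

lemma hasSum_TOp_apply (hTOp : ∀ (O : H →L[ℂ] H) (O' : H' →L[ℂ] H') (x : H) (y : H'),
      TOp O O' (tp x y) = tp (O x) (O' y))
    (hΦ : HasSum (fun n => c n • tp (b n) (b' n)) Φ) (O : H →L[ℂ] H) (O' : H' →L[ℂ] H') :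
    HasSum (fun n => c n • tp (O (b n)) (O' (b' n))) (TOp O O' Φ) := by
  simpa only [map_smul, hTOp] using (TOp O O').hasSum hΦ

lemma TOp_apply_eq_pair (hTOp : ∀ (O : H →L[ℂ] H) (O' : H' →L[ℂ] H') (x : H) (y : H'),
      TOp O O' (tp x y) = tp (O x) (O' y))
    (hΦ : HasSum (fun n => c n • tp (b n) (b' n)) Φ) (hkl : k ≠ l)
    {O : H →L[ℂ] H} {O' : H' →L[ℂ] H'}
    (hO : ∀ n, n ≠ k → n ≠ l → tp (O (b n)) (O' (b' n)) = 0) :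
    TOp O O' Φ = c k • tp (O (b k)) (O' (b' k)) + c l • tp (O (b l)) (O' (b' l)) := by
  classical
  refine (hasSum_TOp_apply hTOp hΦ O O').unique ?_
  rw [← Finset.sum_pair (f := fun n => c n • tp (O (b n)) (O' (b' n))) hkl]
  refine hasSum_sum_of_ne_finset_zero fun n hn => ?_
  simp only [Finset.mem_insert, Finset.mem_singleton, not_or] at hn
  rw [hO n hn.1 hn.2, smul_zero]

lemma TOp_offDiag_id_apply (hTOp : ∀ (O : H →L[ℂ] H) (O' : H' →L[ℂ] H') (x : H) (y : H'),
      TOp O O' (tp x y) = tp (O x) (O' y))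
    (hb : Orthonormal ℂ b) (hΦ : HasSum (fun n => c n • tp (b n) (b' n)) Φ)
    (hkl : k ≠ l) (α : ℝ) :
    TOp (offDiag α (b k) (b l)) (ContinuousLinearMap.id ℂ H') Φ
      = (c k * Complex.exp (-(α * Complex.I))) • tp (b l) (b' k)
        + (c l * Complex.exp (α * Complex.I)) • tp (b k) (b' l) := by
  rw [TOp_apply_eq_pair hTOp hΦ hkl fun n hk hl => by simp [offDiag_apply_of_ne hb hk hl],
    offDiag_apply_left hb hkl, offDiag_apply_right hb hkl]
  simp [smul_smul]

lemma inner_TOp_offDiag_id (htp : ∀ (x x' : H) (y y' : H'),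
      ⟪tp x y, tp x' y'⟫_ℂ = ⟪x, x'⟫_ℂ * ⟪y, y'⟫_ℂ)
    (hTOp : ∀ (O : H →L[ℂ] H) (O' : H' →L[ℂ] H') (x : H) (y : H'),
      TOp O O' (tp x y) = tp (O x) (O' y))
    (hb : Orthonormal ℂ b) (hb' : Orthonormal ℂ b')
    (hΦ : HasSum (fun n => c n • tp (b n) (b' n)) Φ) (hkl : k ≠ l) (α : ℝ) :
    ⟪Φ, TOp (offDiag α (b k) (b l)) (ContinuousLinearMap.id ℂ H') Φ⟫_ℂ = 0 := by
  rw [TOp_offDiag_id_apply hTOp hb hΦ hkl]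
  simp [inner_tp_basis_of_ne htp hb hb' hΦ hkl,
    inner_tp_basis_of_ne htp hb hb' hΦ hkl.symm]

lemma inner_TOp_offDiag_id_sq (htp : ∀ (x x' : H) (y y' : H'),
      ⟪tp x y, tp x' y'⟫_ℂ = ⟪x, x'⟫_ℂ * ⟪y, y'⟫_ℂ)
    (hTOp : ∀ (O : H →L[ℂ] H) (O' : H' →L[ℂ] H') (x : H) (y : H'),
      TOp O O' (tp x y) = tp (O x) (O' y))
    (hb : Orthonormal ℂ b) (hb' : Orthonormal ℂ b')
    (hΦ : HasSum (fun n => c n • tp (b n) (b' n)) Φ) (hkl : k ≠ l) (α : ℝ) :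
    ⟪Φ, TOp (offDiag α (b k) (b l)) (ContinuousLinearMap.id ℂ H')
      (TOp (offDiag α (b k) (b l)) (ContinuousLinearMap.id ℂ H') Φ)⟫_ℂ
      = ((‖c k‖ ^ 2 + ‖c l‖ ^ 2 : ℝ) : ℂ) := by
  rw [TOp_offDiag_id_apply hTOp hb hΦ hkl, map_add, map_smul, map_smul, hTOp, hTOp,
    offDiag_apply_left hb hkl, offDiag_apply_right hb hkl]
  simp only [map_smul, ContinuousLinearMap.id_apply, LinearMap.smul_apply, smul_smul,
    inner_add_right, inner_smul_right, inner_tp_basis_self htp hb hb' hΦ, Complex.ofReal_add,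
    Complex.ofReal_pow]
  have hexp : Complex.exp (-(α * Complex.I)) * Complex.exp (α * Complex.I) = 1 := by
    rw [← Complex.exp_add, neg_add_cancel, Complex.exp_zero]
  linear_combination (c k * conj (c k) + c l * conj (c l)) * hexp + Complex.mul_conj' (c k)
    + Complex.mul_conj' (c l)

lemma inner_TOp_offDiag_offDiag (htp : ∀ (x x' : H) (y y' : H'),
      ⟪tp x y, tp x' y'⟫_ℂ = ⟪x, x'⟫_ℂ * ⟪y, y'⟫_ℂ)
    (hTOp : ∀ (O : H →L[ℂ] H) (O' : H' →L[ℂ] H') (x : H) (y : H'),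
      TOp O O' (tp x y) = tp (O x) (O' y))
    (hb : Orthonormal ℂ b) (hb' : Orthonormal ℂ b')
    (hΦ : HasSum (fun n => c n • tp (b n) (b' n)) Φ) (hkl : k ≠ l) (α β : ℝ) :
    ⟪Φ, TOp (offDiag α (b k) (b l)) (offDiag β (b' k) (b' l)) Φ⟫_ℂ
      = Complex.exp ((α + β) * Complex.I) * conj (c k) * c l
        + Complex.exp (-((α + β) * Complex.I)) * conj (c l) * c k := by
  rw [TOp_apply_eq_pair hTOp hΦ hkl fun n hk hl => by simp [offDiag_apply_of_ne hb hk hl],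
    offDiag_apply_left hb hkl, offDiag_apply_right hb hkl, offDiag_apply_left hb' hkl,
    offDiag_apply_right hb' hkl]
  simp only [map_smul, LinearMap.smul_apply, inner_add_right, inner_smul_right,
    inner_tp_basis_self htp hb hb' hΦ]
  have hexp : Complex.exp ((α + β) * Complex.I)
      = Complex.exp (α * Complex.I) * Complex.exp (β * Complex.I) := by
    rw [← Complex.exp_add, add_mul]
  have hexp_neg : Complex.exp (-((α + β) * Complex.I))
      = Complex.exp (-(α * Complex.I)) * Complex.exp (-(β * Complex.I)) := by
    rw [← Complex.exp_add, add_mul, neg_add]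
  rw [hexp, hexp_neg]
  ring

end TensorProduct

lemma conj_exp_mul_I_mul_conj_mul (θ : ℝ) (z w : ℂ) :
    conj (Complex.exp (θ * Complex.I) * conj z * w)
      = Complex.exp (-(θ * Complex.I)) * conj w * z := by
  rw [map_mul, map_mul, Complex.conj_conj, ← Complex.exp_conj, map_mul, Complex.conj_ofReal,
    Complex.conj_I, mul_neg]
  ring

section Statistics

variable {HT : Type*} [NormedAddCommGroup HT] [InnerProductSpace ℂ HT] {Φ : HT}

lemma Delta_sq_of_inner_eq {A : HT →L[ℂ] HT} {r : ℝ} (h₁ : ⟪Φ, A Φ⟫_ℂ = 0)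
    (h₂ : ⟪Φ, A (A Φ)⟫_ℂ = r) (hr : 0 ≤ r) : Delta Φ A ^ 2 = r := by
  rw [Delta, expec, expec, ContinuousLinearMap.comp_apply, h₁, h₂, Complex.ofReal_re,
    Complex.zero_re, sub_eq_self.2 (zero_pow two_ne_zero), Real.sq_sqrt hr]

lemma corr_eq_of_expec_eq_zero {A B : HT →L[ℂ] HT} (C : HT →L[ℂ] HT) (hA : expec Φ A = 0)
    (hB : expec Φ B = 0) (hAB : Delta Φ A ^ 2 = Delta Φ B ^ 2) :
    corr Φ A B C = expec Φ C / Delta Φ A ^ 2 := by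
  have hΔ : Delta Φ A = Delta Φ B :=
    (sq_eq_sq₀ (Real.sqrt_nonneg _) (Real.sqrt_nonneg _)).1 hAB
  rw [corr, hA, hB, hΔ, sq, mul_zero, sub_zero]

end Statistics

theorem offdiagonal_correlations_determine_coefficients_general
    {H H' HT : Type*}
    [NormedAddCommGroup H] [InnerProductSpace ℂ H]
    [NormedAddCommGroup H'] [InnerProductSpace ℂ H']
    [NormedAddCommGroup HT] [InnerProductSpace ℂ HT]
    {ι : Type*}
    (B : HilbertBasis ι ℂ H) (B' : HilbertBasis ι ℂ H')
    (tp : H →ₗ[ℂ] H' →ₗ[ℂ] HT)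
    (htp : ∀ (x x' : H) (y y' : H'),
      ⟪tp x y, tp x' y'⟫_ℂ = ⟪x, x'⟫_ℂ * ⟪y, y'⟫_ℂ)
    -- TOp O O' = O ⊗ O'
    (TOp : (H →L[ℂ] H) → (H' →L[ℂ] H') → (HT →L[ℂ] HT))
    (hTOp : ∀ (O : H →L[ℂ] H) (O' : H' →L[ℂ] H') (x : H) (y : H'),
      TOp O O' (tp x y) = tp (O x) (O' y))
    (c : ι → ℂ)
    (Φ : HT) (hΦ : HasSum (fun k => c k • tp (B k) (B' k)) Φ)
    (k l : ι) (hkl : k ≠ l) (α β : ℝ) :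
    ⟪Φ, TOp (offDiag α (B k) (B l)) (ContinuousLinearMap.id ℂ H') Φ⟫_ℂ = 0 ∧
    ⟪Φ, TOp (ContinuousLinearMap.id ℂ H) (offDiag β (B' k) (B' l)) Φ⟫_ℂ = 0 ∧
    Delta Φ (TOp (offDiag α (B k) (B l)) (ContinuousLinearMap.id ℂ H')) ^ 2
      = ‖c k‖ ^ 2 + ‖c l‖ ^ 2 ∧
    Delta Φ (TOp (ContinuousLinearMap.id ℂ H) (offDiag β (B' k) (B' l))) ^ 2
      = ‖c k‖ ^ 2 + ‖c l‖ ^ 2 ∧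
    ⟪Φ, TOp (offDiag α (B k) (B l)) (offDiag β (B' k) (B' l)) Φ⟫_ℂ
      = Complex.exp ((α + β) * Complex.I) * conj (c k) * c l
        + Complex.exp (-((α + β) * Complex.I)) * conj (c l) * c k ∧
    (Complex.exp ((α + β) * Complex.I) * conj (c k) * c l
        + Complex.exp (-((α + β) * Complex.I)) * conj (c l) * c k).im = 0 ∧
    (0 < ‖c k‖ ^ 2 + ‖c l‖ ^ 2 →
      corr Φ (TOp (offDiag α (B k) (B l)) (ContinuousLinearMap.id ℂ H'))
             (TOp (ContinuousLinearMap.id ℂ H) (offDiag β (B' k) (B' l)))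
             (TOp (offDiag α (B k) (B l)) (offDiag β (B' k) (B' l)))
        = (Complex.exp ((α + β) * Complex.I) * conj (c k) * c l
            + Complex.exp (-((α + β) * Complex.I)) * conj (c l) * c k).re
          / (‖c k‖ ^ 2 + ‖c l‖ ^ 2)) := by
  -- The second factor is handled by the lemmas for the first one, applied to `tp.flip`.
  have htp' (y y' : H') (x x' : H) : ⟪tp.flip y x, tp.flip y' x'⟫_ℂ = ⟪y, y'⟫_ℂ * ⟪x, x'⟫_ℂ := by
    rw [LinearMap.flip_apply, LinearMap.flip_apply, htp, mul_comm]
  have hTOp' (O' : H' →L[ℂ] H') (O : H →L[ℂ] H) (y : H') (x : H) :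
      TOp O O' (tp.flip y x) = tp.flip (O' y) (O x) :=
    hTOp O O' x y
  have hΦ' : HasSum (fun n => c n • tp.flip (B' n) (B n)) Φ := hΦ
  have hP := inner_TOp_offDiag_id htp hTOp B.orthonormal B'.orthonormal hΦ hkl α
  have hQ := inner_TOp_offDiag_id (TOp := fun O' O => TOp O O') htp' hTOp'
    B'.orthonormal B.orthonormal hΦ' hkl β
  have hDP := Delta_sq_of_inner_eq hP
    (inner_TOp_offDiag_id_sq htp hTOp B.orthonormal B'.orthonormal hΦ hkl α) (by positivity)
  have hDQ := Delta_sq_of_inner_eq hQ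
    (inner_TOp_offDiag_id_sq (TOp := fun O' O => TOp O O') htp' hTOp'
      B'.orthonormal B.orthonormal hΦ' hkl β) (by positivity)
  have hPQ := inner_TOp_offDiag_offDiag htp hTOp B.orthonormal B'.orthonormal hΦ hkl α β
  have hconj := conj_exp_mul_I_mul_conj_mul (α + β) (c k) (c l)
  push_cast at hconj
  refine ⟨hP, hQ, hDP, hDQ, hPQ, ?_, fun _ => ?_⟩
  · rw [← hconj, Complex.add_conj, Complex.ofReal_im]
  · rw [corr_eq_of_expec_eq_zero _ (by rw [expec, hP, Complex.zero_re])
      (by rw [expec, hQ, Complex.zero_re]) (hDP.trans hDQ.symm), hDP, expec, hPQ]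

theorem offdiagonal_correlations_determine_coefficients
    {H H' HT : Type*}
    [NormedAddCommGroup H] [InnerProductSpace ℂ H] [CompleteSpace H]
    [NormedAddCommGroup H'] [InnerProductSpace ℂ H'] [CompleteSpace H']
    [NormedAddCommGroup HT] [InnerProductSpace ℂ HT] [CompleteSpace HT]
    {ι : Type*} [Countable ι]
    (B : HilbertBasis ι ℂ H) (B' : HilbertBasis ι ℂ H')
    (tp : H →ₗ[ℂ] H' →ₗ[ℂ] HT)
    (htp : ∀ (x x' : H) (y y' : H'),
      ⟪tp x y, tp x' y'⟫_ℂ = ⟪x, x'⟫_ℂ * ⟪y, y'⟫_ℂ)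
    (hdense : Dense ((Submodule.span ℂ
      (Set.range fun p : H × H' => tp p.1 p.2) : Submodule ℂ HT) : Set HT))
    -- TOp O O' = O ⊗ O'
    (TOp : (H →L[ℂ] H) → (H' →L[ℂ] H') → (HT →L[ℂ] HT))
    (hTOp : ∀ (O : H →L[ℂ] H) (O' : H' →L[ℂ] H') (x : H) (y : H'),
      TOp O O' (tp x y) = tp (O x) (O' y))
    (c : ι → ℂ) (hc : HasSum (fun k => ‖c k‖ ^ 2) 1)
    (Φ : HT) (hΦ : HasSum (fun k => c k • tp (B k) (B' k)) Φ)
    (k l : ι) (hkl : k ≠ l) (α β : ℝ) :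
    ⟪Φ, TOp (offDiag α (B k) (B l)) (ContinuousLinearMap.id ℂ H') Φ⟫_ℂ = 0 ∧
    ⟪Φ, TOp (ContinuousLinearMap.id ℂ H) (offDiag β (B' k) (B' l)) Φ⟫_ℂ = 0 ∧
    Delta Φ (TOp (offDiag α (B k) (B l)) (ContinuousLinearMap.id ℂ H')) ^ 2
      = ‖c k‖ ^ 2 + ‖c l‖ ^ 2 ∧
    Delta Φ (TOp (ContinuousLinearMap.id ℂ H) (offDiag β (B' k) (B' l))) ^ 2
      = ‖c k‖ ^ 2 + ‖c l‖ ^ 2 ∧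
    ⟪Φ, TOp (offDiag α (B k) (B l)) (offDiag β (B' k) (B' l)) Φ⟫_ℂ
      = Complex.exp ((α + β) * Complex.I) * conj (c k) * c l
        + Complex.exp (-((α + β) * Complex.I)) * conj (c l) * c k ∧
    (Complex.exp ((α + β) * Complex.I) * conj (c k) * c l
        + Complex.exp (-((α + β) * Complex.I)) * conj (c l) * c k).im = 0 ∧
    (0 < ‖c k‖ ^ 2 + ‖c l‖ ^ 2 →
      corr Φ (TOp (offDiag α (B k) (B l)) (ContinuousLinearMap.id ℂ H'))
             (TOp (ContinuousLinearMap.id ℂ H) (offDiag β (B' k) (B' l)))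
             (TOp (offDiag α (B k) (B l)) (offDiag β (B' k) (B' l)))
        = (Complex.exp ((α + β) * Complex.I) * conj (c k) * c l
            + Complex.exp (-((α + β) * Complex.I)) * conj (c l) * c k).re
          / (‖c k‖ ^ 2 + ‖c l‖ ^ 2)) :=
  offdiagonal_correlations_determine_coefficients_general B B' tp htp TOp hTOp c Φ hΦ k l hkl α β
end
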